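/- Let G be a finite simple graph. Define M_0 = ∅, and for each i ≥ 0 let P*_{i+1} be a maximal (with respect to inclusion) set of pairwise vertex-disjoint M_i-augmenting paths of length 2i + 1, and set M_{i+1} = M_i ⊕ E(P*_{i+1}). Then for every i, M_i is a matching in G and every M_i-augmenting path has length at least 2i + 1. -/

import Mathlib

/-!
Induction on `i`. Augmenting a matching along vertex-disjoint augmenting paths gives a matching
again. For the length bound, an `M (i+1)`-augmenting path `q` of length at most `2i + 1` yields
the matching `M (i+1) ∆ E(q)`, which has `m i + 1` more edges than `M i`. By Berge's lemma, its
symmetric difference with `M i` then contains `m i + 1` edge-disjoint `M i`-augmenting paths, each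
of length at least `2i + 1` (Hopcroft–Karp). That symmetric difference is `E(P i) ∆ E(q)`, of size
at most `m i * (2i + 1) + |q|`, so `q` has length `2i + 1` and shares no edge with `E(P i)`. Every
vertex of a path of `P i` lies on an `M (i+1)`-edge of that path, so `q` also shares no vertex with
it; hence `q` is an `M i`-augmenting path contradicting the maximality of `P i`.
-/

/-- The set of vertices covered by a set `M` of edges. -/
def coveredVerts {V : Type*} (M : Set (Sym2 V)) : Set V := {x : V | ∃ e ∈ M, x ∈ e}

/-- `M` is a matching in `G`: a set of edges of `G` that are pairwise non-adjacent. -/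
def IsMatchingSet {V : Type*} (G : SimpleGraph V) (M : Set (Sym2 V)) : Prop :=
  M ⊆ G.edgeSet ∧ ∀ e ∈ M, ∀ f ∈ M, e ≠ f → ∀ x : V, x ∈ e → x ∉ f

/-- `p` is an `M`-augmenting path: a simple path with at least one edge, both of whose
endpoints are `M`-free, and whose edges alternate between `E ∖ M` and `M` (the edge at
position `i` belongs to `M` iff `i` is odd). -/
def IsAugPath {V : Type*} (G : SimpleGraph V) (M : Set (Sym2 V)) {u v : V}
    (p : G.Walk u v) : Prop :=
  p.IsPath ∧ 0 < p.length ∧ u ∉ coveredVerts M ∧ v ∉ coveredVerts M ∧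
    ∀ (i : ℕ) (h : i < p.edges.length), (p.edges.get ⟨i, h⟩ ∈ M ↔ Odd i)

/-- An `M`-augmenting path in `G`, bundled with its endpoints. -/
structure AugPath {V : Type*} (G : SimpleGraph V) (M : Set (Sym2 V)) where
  src : V
  tgt : V
  walk : G.Walk src tgt
  isAug : IsAugPath G M walk

/-- Two bundled augmenting paths are vertex-disjoint. -/
def AugPath.VDisj {V : Type*} {G : SimpleGraph V} {M M' : Set (Sym2 V)}
    (p : AugPath G M) (q : AugPath G M') : Prop :=
  ∀ x : V, x ∈ p.walk.support → x ∉ q.walk.support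

/-- `E(P)`: the set of edges appearing in a (finite) family `P` of augmenting paths. -/
def famEdges {V : Type*} {G : SimpleGraph V} {M : Set (Sym2 V)} {m : ℕ}
    (P : Fin m → AugPath G M) : Set (Sym2 V) :=
  {e : Sym2 V | ∃ i : Fin m, e ∈ (P i).walk.edges}

section

open SimpleGraph

variable {V : Type*} {G : SimpleGraph V}

namespace SimpleGraph.Walk

variable {u v w x : V}

lemma getVert_mem_getElem_edges (p : G.Walk u v) {t : ℕ} (ht : t < p.edges.length) :
    p.getVert t ∈ p.edges[t] ∧ p.getVert (t + 1) ∈ p.edges[t] := by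
  rw [getElem_edges]
  exact ⟨Sym2.mem_mk_left _ _, Sym2.mem_mk_right _ _⟩

lemma IsPath.getVert_mem_getElem_edges_iff {p : G.Walk u v} (hp : p.IsPath) {s t : ℕ}
    (hs : s ≤ p.length) (ht : t < p.edges.length) :
    p.getVert s ∈ p.edges[t] ↔ s = t ∨ s = t + 1 := by
  have ht' : t < p.length := by simpa using ht
  rw [getElem_edges, Sym2.mem_iff]
  constructor
  · rintro (h | h)
    · exact Or.inl (hp.getVert_injOn hs ht'.le h)
    · exact Or.inr (hp.getVert_injOn hs (show t + 1 ≤ p.length by omega) h)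
  · rintro (rfl | rfl) <;> simp

lemma exists_mem_edges_of_mem_support (p : G.Walk u v) (hx : x ∈ p.support)
    (hpos : 0 < p.length) : ∃ e ∈ p.edges, x ∈ e := by
  obtain ⟨s, rfl, hs⟩ := mem_support_iff_exists_getVert.mp hx
  rcases hs.lt_or_eq with hs | rfl
  · exact ⟨_, List.getElem_mem (by simpa using hs), (p.getVert_mem_getElem_edges _).1⟩
  · have h := (p.getVert_mem_getElem_edges (t := p.length - 1) (by simp; omega)).2
    rw [Nat.sub_add_cancel hpos] at h
    exact ⟨_, List.getElem_mem _, h⟩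

lemma exists_getElem_edges_mem (p : G.Walk u v) (hx : x ∈ p.support) (hpos : 0 < p.length)
    (r : ℕ) (hu : r % 2 = 0 ∨ x ≠ u) (hv : (p.length + r) % 2 = 1 ∨ x ≠ v) :
    ∃ t, ∃ ht : t < p.edges.length, (t + r) % 2 = 0 ∧ x ∈ p.edges[t] := by
  obtain ⟨s, rfl, hs⟩ := mem_support_iff_exists_getVert.mp hx
  have hs0 : s = 0 → r % 2 = 0 := fun h => hu.resolve_right (by simp [h])
  have hsL : s = p.length → (p.length + r) % 2 = 1 := fun h => hv.resolve_right (by simp [h])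
  by_cases hst : (s + r) % 2 = 0 ∧ s < p.length
  · exact ⟨s, by simpa using hst.2, hst.1, (p.getVert_mem_getElem_edges _).1⟩
  · have h := (p.getVert_mem_getElem_edges (t := s - 1) (by simp; omega)).2
    rw [Nat.sub_add_cancel (by omega)] at h
    exact ⟨s - 1, _, by omega, h⟩

def Alternates (C : Set (Sym2 V)) (r : ℕ) (p : G.Walk u v) : Prop :=
  ∀ (i : ℕ) (h : i < p.edges.length), p.edges[i] ∈ C ↔ (i + r) % 2 = 0

variable {C C' : Set (Sym2 V)} {r : ℕ}

lemma alternates_nil : (nil : G.Walk u u).Alternates C r := by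
  simp [Alternates]

lemma alternates_congr {p : G.Walk u v} (h : ∀ e ∈ p.edges, e ∈ C ↔ e ∈ C') :
    p.Alternates C r ↔ p.Alternates C' r :=
  forall₂_congr fun i hi => by rw [h _ (List.getElem_mem hi)]

lemma Alternates.concat {p : G.Walk u v} (hp : p.Alternates C r) (h : G.Adj v w)
    (hw : s(v, w) ∈ C ↔ (p.length + r) % 2 = 0) : (p.concat h).Alternates C r := by
  intro i hi
  simp only [edges_concat, List.concat_eq_append, List.length_append, List.length_singleton,
    length_edges] at hi ⊢
  rcases (Nat.lt_succ_iff.mp hi).lt_or_eq with hi | rfl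
  · rw [List.getElem_append_left (by simpa using hi)]
    exact hp i _
  · simpa using hw

lemma Alternates.symmDiff {p : G.Walk u v} {S : Set (Sym2 V)} (hp : p.Alternates C (r + 1))
    (hS : ∀ e ∈ p.edges, e ∈ S) : p.Alternates (symmDiff C S) r := by
  intro i hi
  simp only [Set.mem_symmDiff, hS _ (List.getElem_mem hi), hp i hi, not_true_eq_false,
    and_false, true_and, false_or]
  omega

lemma alternates_cons_iff {p : G.Walk v w} (h : G.Adj u v) :
    (cons h p).Alternates C r ↔ (s(u, v) ∈ C ↔ r % 2 = 0) ∧ p.Alternates C (r + 1) := by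
  refine ⟨fun hp => ⟨by simpa using hp 0 (by simp), fun i hi => ?_⟩, fun ⟨h0, hp⟩ i hi => ?_⟩
  · simpa [Nat.add_right_comm i 1 r, add_assoc] using hp (i + 1) (by simpa using hi)
  · cases i with
    | zero => simpa using h0
    | succ i => simpa [Nat.add_right_comm i 1 r, add_assoc] using hp i (by simpa using hi)

end SimpleGraph.Walk

lemma IsMatchingSet.eq_of_mem {C : Set (Sym2 V)} (hC : IsMatchingSet G C) {e f : Sym2 V}
    (he : e ∈ C) (hf : f ∈ C) {x : V} (hxe : x ∈ e) (hxf : x ∈ f) : e = f :=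
  by_contra fun hne => hC.2 e he f hf hne x hxe hxf

lemma IsMatchingSet.mono {C D : Set (Sym2 V)} (hC : IsMatchingSet G C) (hDC : D ⊆ C) :
    IsMatchingSet G D :=
  ⟨hDC.trans hC.1, fun e he f hf => hC.2 e (hDC he) f (hDC hf)⟩

lemma IsMatchingSet.symmDiff_of_diff {C S : Set (Sym2 V)} (hC : IsMatchingSet G C)
    (hS : IsMatchingSet G (S \ C)) (hsep : ∀ e ∈ C \ S, ∀ f ∈ S \ C, ∀ x ∈ e, x ∉ f) :
    IsMatchingSet G (symmDiff C S) := by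
  refine ⟨fun e he => he.elim (fun he => hC.1 he.1) (fun he => hS.1 he), ?_⟩
  rintro e (he | he) f (hf | hf) hef x hxe hxf
  · exact hC.2 e he.1 f hf.1 hef x hxe hxf
  · exact hsep e he f hf x hxe hxf
  · exact hsep f hf e he x hxf hxe
  · exact hS.2 e he f hf hef x hxe hxf

lemma IsMatchingSet.iUnion {ι : Type*} {S : ι → Set (Sym2 V)} (hS : ∀ j, IsMatchingSet G (S j))
    (hsep : ∀ j j', j ≠ j' → ∀ e ∈ S j, ∀ f ∈ S j', ∀ x ∈ e, x ∉ f) :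
    IsMatchingSet G (⋃ j, S j) := by
  refine ⟨Set.iUnion_subset fun j => (hS j).1, ?_⟩
  simp only [Set.mem_iUnion]
  rintro e ⟨j, he⟩ f ⟨j', hf⟩ hef x hxe hxf
  rcases eq_or_ne j j' with rfl | hjj'
  · exact (hS j).2 e he f hf hef x hxe hxf
  · exact hsep j j' hjj' e he f hf x hxe hxf

lemma IsMatchingSet.ncard_coveredVerts [Finite V] {C : Set (Sym2 V)} (hC : IsMatchingSet G C) :
    (coveredVerts C).ncard = 2 * C.ncard := by
  induction C, Set.toFinite C using Set.Finite.induction_on with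
  | empty => simp [coveredVerts]
  | @insert e C he _ ih =>
    have hcov : coveredVerts (insert e C) = {x | x ∈ e} ∪ coveredVerts C := by
      ext x; simp [coveredVerts]
    have hdisj : Disjoint {x | x ∈ e} (coveredVerts C) := by
      refine Set.disjoint_left.mpr fun x hxe ⟨f, hf, hxf⟩ => he ?_
      rwa [hC.eq_of_mem (Set.mem_insert e C) (Set.mem_insert_of_mem e hf) hxe hxf]
    have he2 : {x | x ∈ e}.ncard = 2 := by
      induction e with
      | _ a b =>
        have hab : a ≠ b := (G.mem_edgeSet.mp (hC.1 (Set.mem_insert _ C))).ne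
        rw [show {x | x ∈ s(a, b)} = ({a, b} : Set V) by ext; simp, Set.ncard_pair hab]
    rw [hcov, Set.ncard_union_eq hdisj, he2, ih (hC.mono (Set.subset_insert e C)),
      Set.ncard_insert_of_notMem he]
    ring

lemma ncard_symmDiff_add_two_mul_ncard_inter {α : Type*} [Finite α] (A B : Set α) :
    (symmDiff A B).ncard + 2 * (A ∩ B).ncard = A.ncard + B.ncard := by
  rw [← Set.ncard_union_add_ncard_inter, show A ∪ B = symmDiff A B ∪ A ∩ B from
    (symmDiff_sup_inf A B).symm, Set.ncard_union_eq (s := symmDiff A B) (t := A ∩ B)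
    (disjoint_symmDiff_inf A B)]
  ring

namespace SimpleGraph.Walk

variable {u v w x : V} {C : Set (Sym2 V)} {r : ℕ}

lemma Alternates.mem_edges_of_mem {p : G.Walk u v} (hC : IsMatchingSet G C)
    (hp : p.Alternates C r) (hpos : 0 < p.length) (hu : r % 2 = 0 ∨ u ∉ coveredVerts C)
    (hv : (p.length + r) % 2 = 1 ∨ v ∉ coveredVerts C) (hx : x ∈ p.support) {e : Sym2 V}
    (he : e ∈ C) (hxe : x ∈ e) : e ∈ p.edges := by
  have hcov : x ∈ coveredVerts C := ⟨e, he, hxe⟩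
  obtain ⟨t, ht, hpar, hxt⟩ := p.exists_getElem_edges_mem hx hpos r
    (hu.imp_right fun h hxu => h (hxu ▸ hcov)) (hv.imp_right fun h hxv => h (hxv ▸ hcov))
  rw [hC.eq_of_mem he ((hp t ht).mpr hpar) hxe hxt]
  exact List.getElem_mem ht

lemma Alternates.notMem_support_of_adj {p : G.Walk u v} (hC : IsMatchingSet G C)
    (hpath : p.IsPath) (hp : p.Alternates C r) (hL : (p.length + r) % 2 = 0)
    (hu : r % 2 = 0 ∨ u ∉ coveredVerts C) (h : G.Adj v w) (hw : s(v, w) ∈ C) :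
    w ∉ p.support := by
  intro hws
  obtain ⟨s, hs, hsL⟩ := mem_support_iff_exists_getVert.mp hws
  have hsL' : s < p.length := hsL.lt_of_ne fun hsL => h.ne (by rw [← hs, hsL, getVert_length])
  obtain ⟨t, ht, hpar, hwt⟩ := p.exists_getElem_edges_mem hws (by omega) r
    (hu.imp_right fun hu hwu => hu ⟨_, hw, hwu ▸ Sym2.mem_mk_right _ _⟩) (Or.inr h.ne.symm)
  have hvt : p.getVert p.length ∈ p.edges[t] := by
    rw [getVert_length, ← hC.eq_of_mem hw ((hp t ht).mpr hpar) (Sym2.mem_mk_right _ _) hwt]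
    exact Sym2.mem_mk_left _ _
  have := (hpath.getVert_mem_getElem_edges_iff le_rfl ht).mp hvt
  simp only [length_edges] at ht
  omega

lemma IsPath.ncard_edgeSet {p : G.Walk u v} (hpath : p.IsPath) : p.edgeSet.ncard = p.length := by
  classical
  rw [← coe_edges_toFinset, Set.ncard_coe_finset, List.toFinset_card_of_nodup hpath.edges_nodup,
    length_edges]

lemma Alternates.ncard_edgeSet_inter {p : G.Walk u v} (hpath : p.IsPath) (hp : p.Alternates C r) :
    (p.edgeSet ∩ C).ncard = (p.length + (r + 1) % 2) / 2 := by
  induction p generalizing r with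
  | nil => simp only [edgeSet_nil, Set.empty_inter, Set.ncard_empty, length_nil]; omega
  | @cons a b c h q ih =>
    rw [cons_isPath_iff] at hpath
    obtain ⟨h0, hq⟩ := (alternates_cons_iff h).mp hp
    have hnot : s(a, b) ∉ q.edgeSet ∩ C := fun he => hpath.2 (q.fst_mem_support_of_mem_edges he.1)
    have hcount := ih hpath.1 hq
    rw [edgeSet_cons, length_cons]
    by_cases hab : s(a, b) ∈ C
    · rw [Set.insert_inter_of_mem hab, Set.ncard_insert_of_notMem hnot
        ((List.finite_toSet q.edges).inter_of_left C), hcount]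
      have := h0.mp hab
      omega
    · rw [Set.insert_inter_of_notMem hab, hcount]
      have := h0.not.mp hab
      omega

lemma IsPath.isMatchingSet_edgeSet_diff {p : G.Walk u v} (hpath : p.IsPath)
    (hp : p.Alternates C r) : IsMatchingSet G (p.edgeSet \ C) := by
  refine ⟨fun e he => p.edges_subset_edgeSet he.1, ?_⟩
  rintro e ⟨he, heC⟩ f ⟨hf, hfC⟩ hef x hxe hxf
  obtain ⟨i, hi, rfl⟩ := List.getElem_of_mem he
  obtain ⟨j, hj, rfl⟩ := List.getElem_of_mem hf
  have hi' := (hp i hi).not.mp heC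
  have hj' := (hp j hj).not.mp hfC
  have hij : i ≠ j := by rintro rfl; exact hef rfl
  have hiL : i < p.length := by simpa using hi
  rw [getElem_edges, Sym2.mem_iff] at hxe
  rcases hxe with rfl | rfl
  · have := (hpath.getVert_mem_getElem_edges_iff hiL.le hj).mp hxf
    omega
  · have := (hpath.getVert_mem_getElem_edges_iff hiL hj).mp hxf
    omega

end SimpleGraph.Walk

lemma IsMatchingSet.symmDiff_edgeSet {C : Set (Sym2 V)} {r : ℕ} {u v : V} {p : G.Walk u v}
    (hC : IsMatchingSet G C) (hpath : p.IsPath) (hp : p.Alternates C r)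
    (hcl : ∀ x ∈ p.support, ∀ e ∈ C, x ∈ e → e ∈ p.edges) :
    IsMatchingSet G (symmDiff C p.edgeSet) :=
  hC.symmDiff_of_diff (hpath.isMatchingSet_edgeSet_diff hp) fun e he _ hf x hxe hxf =>
    he.2 (hcl x (p.mem_support_of_mem_edges hf.1 hxf) e he.1 hxe)

section AugPath

variable {C C' : Set (Sym2 V)} {u v x : V} {p : G.Walk u v}

lemma isAugPath_iff : IsAugPath G C p ↔
    p.IsPath ∧ 0 < p.length ∧ u ∉ coveredVerts C ∧ v ∉ coveredVerts C ∧ p.Alternates C 1 := by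
  simp only [IsAugPath, Walk.Alternates, List.get_eq_getElem, Nat.odd_iff,
    Nat.succ_mod_two_eq_zero_iff]

lemma isAugPath_congr (h : ∀ e, ∀ x ∈ p.support, x ∈ e → (e ∈ C ↔ e ∈ C')) :
    IsAugPath G C p ↔ IsAugPath G C' p := by
  have hcov : ∀ x ∈ p.support, x ∈ coveredVerts C ↔ x ∈ coveredVerts C' := fun x hx => by
    simp only [coveredVerts, Set.mem_ofPred_eq]
    exact exists_congr fun e => and_congr_left fun hxe => h e x hx hxe
  rw [isAugPath_iff, isAugPath_iff, hcov u p.start_mem_support, hcov v p.end_mem_support,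
    Walk.alternates_congr fun e he =>
      h e _ (p.mem_support_of_mem_edges he (Sym2.out_fst_mem e)) (Sym2.out_fst_mem e)]

namespace IsAugPath

lemma alternates (h : IsAugPath G C p) : p.Alternates C 1 := (isAugPath_iff.mp h).2.2.2.2

lemma length_mod_two (h : IsAugPath G C p) : p.length % 2 = 1 := by
  obtain ⟨-, hpos, -, hv, hp⟩ := isAugPath_iff.mp h
  have hlast := (p.getVert_mem_getElem_edges (t := p.length - 1) (by simp; omega)).2
  rw [Nat.sub_add_cancel hpos, Walk.getVert_length] at hlast
  have := (hp _ _).not.mp fun he => hv ⟨_, he, hlast⟩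
  omega

lemma mem_edges_of_mem (h : IsAugPath G C p) (hC : IsMatchingSet G C) (hx : x ∈ p.support)
    {e : Sym2 V} (he : e ∈ C) (hxe : x ∈ e) : e ∈ p.edges :=
  have ⟨_, hpos, hu, hv, hp⟩ := isAugPath_iff.mp h
  hp.mem_edges_of_mem hC hpos (Or.inr hu) (Or.inr hv) hx he hxe

lemma isMatchingSet_symmDiff (h : IsAugPath G C p) (hC : IsMatchingSet G C) :
    IsMatchingSet G (symmDiff C p.edgeSet) :=
  hC.symmDiff_edgeSet h.1 h.alternates fun _ hx _ he hxe =>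
    h.mem_edges_of_mem hC hx he hxe

lemma two_mul_ncard_edgeSet_inter_add_one (h : IsAugPath G C p) :
    2 * (p.edgeSet ∩ C).ncard + 1 = p.length := by
  rw [h.alternates.ncard_edgeSet_inter h.1]
  have := h.length_mod_two
  omega

lemma ncard_symmDiff [Finite V] (h : IsAugPath G C p) :
    (symmDiff C p.edgeSet).ncard = C.ncard + 1 := by
  have := ncard_symmDiff_add_two_mul_ncard_inter C p.edgeSet
  rw [h.1.ncard_edgeSet, Set.inter_comm, ← h.two_mul_ncard_edgeSet_inter_add_one] at this
  omega

end IsAugPath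

end AugPath

section Family

variable {N : Set (Sym2 V)} {m : ℕ} {P : Fin m → AugPath G N}

lemma famEdges_eq_iUnion (P : Fin m → AugPath G N) : famEdges P = ⋃ j, (P j).walk.edgeSet := by
  ext e
  simp [famEdges, Walk.edgeSet]

lemma AugPath.VDisj.notMem_of_mem_edges {M M' : Set (Sym2 V)} {p : AugPath G M}
    {q : AugPath G M'} (hpq : p.VDisj q) {e f : Sym2 V} (he : e ∈ p.walk.edges)
    (hf : f ∈ q.walk.edges) {x : V} (hxe : x ∈ e) : x ∉ f := fun hxf =>
  hpq x (p.walk.mem_support_of_mem_edges he hxe) (q.walk.mem_support_of_mem_edges hf hxf)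

lemma AugPath.VDisj.disjoint_edgeSet {M M' : Set (Sym2 V)} {p : AugPath G M}
    {q : AugPath G M'} (hpq : p.VDisj q) : Disjoint p.walk.edgeSet q.walk.edgeSet :=
  Set.disjoint_left.mpr fun e he he' =>
    hpq.notMem_of_mem_edges he he' (Sym2.out_fst_mem e) (Sym2.out_fst_mem e)

lemma IsMatchingSet.symmDiff_famEdges (hN : IsMatchingSet G N)
    (hdisj : ∀ j j', j ≠ j' → (P j).VDisj (P j')) :
    IsMatchingSet G (symmDiff N (famEdges P)) := by
  rw [famEdges_eq_iUnion]
  refine hN.symmDiff_of_diff ?_ ?_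
  · rw [Set.iUnion_sdiff]
    exact IsMatchingSet.iUnion
      (fun j => (P j).isAug.1.isMatchingSet_edgeSet_diff (P j).isAug.alternates)
      fun j j' hjj' e he f hf x hxe => (hdisj j j' hjj').notMem_of_mem_edges he.1 hf.1 hxe
  · rintro e ⟨heN, he⟩ f ⟨hf, -⟩ x hxe hxf
    obtain ⟨j, hfj⟩ := Set.mem_iUnion.mp hf
    exact he (Set.mem_iUnion.mpr
      ⟨j, (P j).isAug.mem_edges_of_mem hN ((P j).walk.mem_support_of_mem_edges hfj hxf) heN hxe⟩)

lemma ncard_famEdges_inter [Finite V] (hdisj : ∀ j j', j ≠ j' → (P j).VDisj (P j'))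
    (C : Set (Sym2 V)) :
    (famEdges P ∩ C).ncard = ∑ j, ((P j).walk.edgeSet ∩ C).ncard := by
  rw [famEdges_eq_iUnion, Set.iUnion_inter, Set.ncard_iUnion_of_finite (fun _ => Set.toFinite _)
    fun j j' hjj' => ((hdisj j j' hjj').disjoint_edgeSet).mono Set.inter_subset_left
      Set.inter_subset_left, finsum_eq_sum_of_fintype]

lemma ncard_famEdges [Finite V] (hdisj : ∀ j j', j ≠ j' → (P j).VDisj (P j')) :
    (famEdges P).ncard = ∑ j, (P j).walk.length := by
  rw [← Set.inter_univ (famEdges P), ncard_famEdges_inter hdisj]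
  exact Finset.sum_congr rfl fun j _ => by rw [Set.inter_univ, (P j).isAug.1.ncard_edgeSet]

lemma ncard_symmDiff_famEdges [Finite V] (hdisj : ∀ j j', j ≠ j' → (P j).VDisj (P j')) :
    (symmDiff N (famEdges P)).ncard = N.ncard + m := by
  have h := ncard_symmDiff_add_two_mul_ncard_inter N (famEdges P)
  have hlen : ∑ j, (P j).walk.length = ∑ j, (2 * ((P j).walk.edgeSet ∩ N).ncard + 1) :=
    Finset.sum_congr rfl fun j _ => (P j).isAug.two_mul_ncard_edgeSet_inter_add_one.symm
  rw [Finset.sum_add_distrib, ← Finset.mul_sum, Finset.sum_const, Finset.card_univ,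
    Fintype.card_fin, smul_eq_mul, mul_one] at hlen
  rw [Set.inter_comm, ncard_famEdges_inter hdisj, ncard_famEdges hdisj, hlen] at h
  omega

end Family

lemma SimpleGraph.exists_isPath_forall_length_le [Finite V] {u : V} (Q : ∀ v, G.Walk u v → Prop)
    (hnil : Q u .nil) : ∃ v, ∃ p : G.Walk u v, p.IsPath ∧ Q v p ∧
      ∀ w (q : G.Walk u w), q.IsPath → Q w q → q.length ≤ p.length := by
  have := Fintype.ofFinite V
  let T := {n | ∃ w, ∃ q : G.Walk u w, q.IsPath ∧ Q w q ∧ q.length = n}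
  have hbdd : BddAbove T := ⟨Fintype.card V, fun n ⟨_, q, hq, _, hn⟩ => hn ▸ hq.length_lt.le⟩
  obtain ⟨v, p, hp, hQ, hlen⟩ := Nat.sSup_mem (s := T) ⟨0, u, .nil, .nil, hnil, rfl⟩ hbdd
  exact ⟨v, p, hp, hQ, fun w q hq hQq => hlen ▸ le_csSup hbdd ⟨w, q, hq, hQq, rfl⟩⟩

lemma SimpleGraph.Walk.exists_concat_alternates {C D : Set (Sym2 V)} {r r' : ℕ} {u v : V}
    {p : G.Walk u v} (hC : IsMatchingSet G C) (hD : IsMatchingSet G D) (hpath : p.IsPath)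
    (hpC : p.Alternates C r) (hpD : p.Alternates D r') (hrr' : (r + r') % 2 = 1)
    (hL : (p.length + r) % 2 = 0) (huC : r % 2 = 0 ∨ u ∉ coveredVerts C)
    (huD : p.length = 0 → u ∉ coveredVerts D) (hv : v ∈ coveredVerts C) :
    ∃ w, ∃ q : G.Walk u w,
      q.IsPath ∧ q.Alternates C r ∧ q.Alternates D r' ∧ q.length = p.length + 1 := by
  obtain ⟨g, hg, hvg⟩ := hv
  have hgw : s(v, Sym2.Mem.other hvg) = g := Sym2.other_spec hvg
  have hadj : G.Adj v (Sym2.Mem.other hvg) := by rw [← G.mem_edgeSet, hgw]; exact hC.1 hg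
  rw [← hgw] at hg
  have hgD : s(v, Sym2.Mem.other hvg) ∉ D := by
    intro hgD
    rcases Nat.eq_zero_or_pos p.length with h0 | hpos
    · obtain rfl := p.eq_of_length_eq_zero h0
      exact huD h0 (show u ∈ coveredVerts D from ⟨_, hgD, Sym2.mem_mk_left _ _⟩)
    · have hlast := (p.getVert_mem_getElem_edges (t := p.length - 1) (by simp; omega)).2
      rw [Nat.sub_add_cancel hpos, getVert_length] at hlast
      have heq := hD.eq_of_mem hgD ((hpD _ _).mpr (by omega)) (Sym2.mem_mk_left _ _) hlast
      have := (hpC _ _).mp (heq ▸ hg)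
      omega
  exact ⟨_, p.concat hadj, hpath.concat (hpC.notMem_support_of_adj hC hpath hL huC hadj hg) hadj,
    hpC.concat hadj (iff_of_true hg hL), hpD.concat hadj (iff_of_false hgD (by omega)),
    p.length_concat hadj⟩

/-- `p` avoids the vertices of `S`, since each of its edges lies in `F \ S` or in `N \ S`. -/
lemma IsAugPath.of_diff {F N S : Set (Sym2 V)}
    (hS : ∀ e ∈ F ∪ N, ∀ x ∈ e, x ∈ coveredVerts S → e ∈ S) {a b : V} {p : G.Walk a b}
    (hpN : IsAugPath G (N \ S) p) (hpF : p.Alternates (F \ S) 0) :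
    IsAugPath G N p ∧ p.Alternates F 0 := by
  obtain ⟨-, hpos, -, -, hpN'⟩ := isAugPath_iff.mp hpN
  have hsupp : ∀ x ∈ p.support, x ∉ coveredVerts S := by
    intro x hx hxS
    obtain ⟨e, he, hxe⟩ := p.exists_mem_edges_of_mem_support hx hpos
    obtain ⟨i, hi, rfl⟩ := List.getElem_of_mem he
    rcases Nat.mod_two_eq_zero_or_one i with hi2 | hi2
    · have hiF := (hpF i hi).mpr hi2
      exact hiF.2 (hS _ (Or.inl hiF.1) x hxe hxS)
    · have hiN := (hpN' i hi).mpr (by omega)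
      exact hiN.2 (hS _ (Or.inr hiN.1) x hxe hxS)
  have hagree : ∀ C : Set (Sym2 V), ∀ e, ∀ x ∈ p.support, x ∈ e → (e ∈ C \ S ↔ e ∈ C) :=
    fun C e x hx hxe => ⟨And.left, fun he => ⟨he, fun heS => hsupp x hx ⟨e, heS, hxe⟩⟩⟩
  exact ⟨(isAugPath_congr (hagree N)).mp hpN, (Walk.alternates_congr fun e he => hagree F e _
    (p.mem_support_of_mem_edges he (Sym2.out_fst_mem e)) (Sym2.out_fst_mem e)).mp hpF⟩

/-- Berge's lemma. -/
theorem exists_isAugPath_alternates_of_ncard_lt [Finite V] {F N : Set (Sym2 V)}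
    (hF : IsMatchingSet G F) (hN : IsMatchingSet G N) (hlt : N.ncard < F.ncard) :
    ∃ (a b : V) (p : G.Walk a b), IsAugPath G N p ∧ p.Alternates F 0 := by
  obtain ⟨n, hn⟩ : ∃ n, N.ncard = n := ⟨_, rfl⟩
  induction n using Nat.strong_induction_on generalizing F N with
  | _ n ih =>
  obtain ⟨v₀, hv₀F, hv₀N⟩ : ∃ v₀, v₀ ∈ coveredVerts F ∧ v₀ ∉ coveredVerts N := by
    by_contra! h
    have := Set.ncard_le_ncard (fun x hx => h x hx) (Set.toFinite (coveredVerts N))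
    rw [hF.ncard_coveredVerts, hN.ncard_coveredVerts] at this
    omega
  obtain ⟨b, p, hpath, ⟨hpF, hpN⟩, hmax⟩ := exists_isPath_forall_length_le (G := G)
    (fun _ q => q.Alternates F 0 ∧ q.Alternates N 1) ⟨Walk.alternates_nil, Walk.alternates_nil⟩
  have hlong : ∀ w (q : G.Walk v₀ w), q.IsPath → q.Alternates F 0 → q.Alternates N 1 →
      q.length ≠ p.length + 1 := fun w q hq hqF hqN hlen => by
    have := hmax w q hq ⟨hqF, hqN⟩
    omega
  rcases Nat.mod_two_eq_zero_or_one p.length with heven | hodd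
  · have hbF : b ∉ coveredVerts F := fun hb => by
      obtain ⟨w, q, hq, hqF, hqN, hlen⟩ := p.exists_concat_alternates hF hN hpath hpF hpN
        (by norm_num) (by omega) (Or.inl rfl) (fun _ => hv₀N) hb
      exact hlong w q hq hqF hqN hlen
    have hpos : 0 < p.length :=
      Nat.pos_of_ne_zero fun h0 => hbF (p.eq_of_length_eq_zero h0 ▸ hv₀F)
    -- `p` is a whole component of `F ∪ N`, with as many `F`-edges as `N`-edges: discard it.
    have hS : ∀ e ∈ F ∪ N, ∀ x ∈ e, x ∈ coveredVerts p.edgeSet → e ∈ p.edgeSet := by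
      rintro e he x hxe ⟨f, hf, hxf⟩
      have hx := p.mem_support_of_mem_edges hf hxf
      rcases he with he | he
      · exact hpF.mem_edges_of_mem hF hpos (Or.inl rfl) (Or.inr hbF) hx he hxe
      · exact hpN.mem_edges_of_mem hN hpos (Or.inr hv₀N) (Or.inl (by omega)) hx he hxe
    have hcF := Set.ncard_inter_add_ncard_sdiff_eq_ncard F p.edgeSet
    have hcN := Set.ncard_inter_add_ncard_sdiff_eq_ncard N p.edgeSet
    rw [Set.inter_comm, hpF.ncard_edgeSet_inter hpath] at hcF
    rw [Set.inter_comm, hpN.ncard_edgeSet_inter hpath] at hcN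
    obtain ⟨a, b', p', hp'N, hp'F⟩ := ih _ (by omega)
      (hF.mono (Set.sdiff_subset (t := p.edgeSet))) (hN.mono (Set.sdiff_subset (t := p.edgeSet)))
      (by omega) rfl
    exact ⟨a, b', p', IsAugPath.of_diff hS hp'N hp'F⟩
  · have hbN : b ∉ coveredVerts N := fun hb => by
      obtain ⟨w, q, hq, hqN, hqF, hlen⟩ := p.exists_concat_alternates hN hF hpath hpN hpF
        (by norm_num) (by omega) (Or.inr hv₀N) (fun _ => by omega) hb
      exact hlong w q hq hqF hqN hlen
    exact ⟨v₀, b, p, isAugPath_iff.mpr ⟨hpath, by omega, hv₀N, hbN, hpN⟩, hpF⟩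

/-- The counting lemma of Hopcroft and Karp. -/
theorem mul_le_ncard_symmDiff [Finite V] {F N : Set (Sym2 V)} (hF : IsMatchingSet G F)
    (hN : IsMatchingSet G N) {l : ℕ} (hl : ∀ q : AugPath G N, l ≤ q.walk.length) {s : ℕ}
    (hs : N.ncard + s ≤ F.ncard) : s * l ≤ (symmDiff F N).ncard := by
  induction s generalizing F with
  | zero => simp
  | succ s ih =>
    obtain ⟨a, b, p, hpN, hpF⟩ := exists_isAugPath_alternates_of_ncard_lt hF hN (by omega)
    obtain ⟨hpath, hpos, -, -, hpN'⟩ := isAugPath_iff.mp hpN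
    have hodd := hpN.length_mod_two
    have hsub : p.edgeSet ⊆ symmDiff F N := fun e he => by
      obtain ⟨i, hi, rfl⟩ := List.getElem_of_mem he
      rcases Nat.mod_two_eq_zero_or_one i with hi2 | hi2
      · exact Or.inl ⟨(hpF i hi).mpr hi2, (hpN' i hi).not.mpr (by omega)⟩
      · exact Or.inr ⟨(hpN' i hi).mpr (by omega), (hpF i hi).not.mpr (by omega)⟩
    have hF' : IsMatchingSet G (symmDiff F p.edgeSet) :=
      hF.symmDiff_edgeSet hpath hpF fun x hx e he hxe =>
        hpF.mem_edges_of_mem hF hpos (Or.inl rfl) (Or.inl (by omega)) hx he hxe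
    have hcard := ncard_symmDiff_add_two_mul_ncard_inter F p.edgeSet
    rw [hpath.ncard_edgeSet, Set.inter_comm, hpF.ncard_edgeSet_inter hpath] at hcard
    have hrest : symmDiff (symmDiff F p.edgeSet) N = symmDiff F N \ p.edgeSet := by
      rw [symmDiff_right_comm, symmDiff_of_ge hsub]
    have := ih hF' (by omega)
    rw [hrest, Set.ncard_sdiff hsub, hpath.ncard_edgeSet] at this
    have := Set.ncard_le_ncard hsub
    rw [hpath.ncard_edgeSet] at this
    have hlp : l ≤ p.length := hl ⟨a, b, p, hpN⟩
    rw [Nat.succ_mul]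
    omega

theorem lt_length_of_augPath_symmDiff_famEdges [Finite V] {N : Set (Sym2 V)}
    (hN : IsMatchingSet G N) {l m : ℕ} (hl : ∀ q : AugPath G N, l ≤ q.walk.length)
    (P : Fin m → AugPath G N) (hlen : ∀ j, (P j).walk.length = l)
    (hdisj : ∀ j j', j ≠ j' → (P j).VDisj (P j'))
    (hmax : ∀ q : AugPath G N, q.walk.length = l → ¬ ∀ j, q.VDisj (P j))
    (q : AugPath G (symmDiff N (famEdges P))) : l < q.walk.length := by
  by_contra! hql
  have hN' := hN.symmDiff_famEdges hdisj
  have hkey := mul_le_ncard_symmDiff (q.isAug.isMatchingSet_symmDiff hN') hN hl (s := m + 1)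
    (by rw [q.isAug.ncard_symmDiff, ncard_symmDiff_famEdges hdisj, add_assoc])
  rw [symmDiff_comm _ N, symmDiff_assoc, symmDiff_symmDiff_cancel_left, Nat.succ_mul] at hkey
  have hsd := ncard_symmDiff_add_two_mul_ncard_inter (famEdges P) q.walk.edgeSet
  rw [ncard_famEdges hdisj, Finset.sum_congr rfl fun j _ => hlen j, Finset.sum_const,
    Finset.card_univ, Fintype.card_fin, smul_eq_mul, q.isAug.1.ncard_edgeSet] at hsd
  have hPq : famEdges P ∩ q.walk.edgeSet = ∅ := (Set.ncard_eq_zero (Set.toFinite _)).mp (by omega)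
  have hvd : ∀ j, q.VDisj (P j) := fun j x hxq hxP => by
    have hPN' : (P j).walk.Alternates (symmDiff N (famEdges P)) 0 :=
      (P j).isAug.alternates.symmDiff fun e he => ⟨j, he⟩
    obtain ⟨t, ht, hpar, hxt⟩ := (P j).walk.exists_getElem_edges_mem hxP (P j).isAug.2.1 0
      (Or.inl rfl) (Or.inl (P j).isAug.length_mod_two)
    have he : (P j).walk.edges[t] ∈ famEdges P ∩ q.walk.edgeSet :=
      ⟨⟨j, List.getElem_mem ht⟩, q.isAug.mem_edges_of_mem hN' hxq ((hPN' t ht).mpr hpar) hxt⟩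
    rwa [hPq] at he
  have hqN : IsAugPath G N q.walk := by
    refine (isAugPath_congr fun e x hx hxe => ?_).mp q.isAug
    have heP : e ∉ famEdges P := fun ⟨j, hej⟩ =>
      hvd j x hx ((P j).walk.mem_support_of_mem_edges hej hxe)
    simp [Set.mem_symmDiff, heP]
  exact hmax ⟨_, _, q.walk, hqN⟩ (show q.walk.length = l by omega) hvd

end

/-- Start with `M 0 = ∅`, and for each `i` let `P i` be a maximal
(w.r.t. inclusion) family of pairwise vertex-disjoint `M i`-augmenting paths of length
`2i + 1`, and set `M (i+1) = M i ⊕ E(P i)`.  Then for every `i`, `M i` is a matching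
and every `M i`-augmenting path has length at least `2i + 1`. -/
theorem iterated_augmentation_invariant
    {V : Type*} [Fintype V] (G : SimpleGraph V)
    (M : ℕ → Set (Sym2 V)) (hM0 : M 0 = ∅)
    (m : ℕ → ℕ) (P : (i : ℕ) → Fin (m i) → AugPath G (M i))
    (hlen : ∀ i j, (P i j).walk.length = 2 * i + 1)
    (hdisj : ∀ i j j', j ≠ j' → (P i j).VDisj (P i j'))
    (hmaximal : ∀ (i : ℕ) (q : AugPath G (M i)),
      q.walk.length = 2 * i + 1 → ¬ (∀ j, q.VDisj (P i j)))
    (hstep : ∀ i, M (i + 1) = symmDiff (M i) (famEdges (P i))) :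
    ∀ i : ℕ, IsMatchingSet G (M i) ∧
      ∀ q : AugPath G (M i), 2 * i + 1 ≤ q.walk.length := by
  intro i
  induction i with
  | zero =>
    rw [hM0]
    exact ⟨⟨Set.empty_subset _, fun e he => he.elim⟩, fun q => q.isAug.2.1⟩
  | succ i ih =>
    obtain ⟨hmatch, hbound⟩ := ih
    rw [hstep]
    refine ⟨hmatch.symmDiff_famEdges (hdisj i), fun q => ?_⟩
    have := lt_length_of_augPath_symmDiff_famEdges hmatch hbound (P i) (hlen i) (hdisj i)
      (hmaximal i) q
    have := q.isAug.length_mod_two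
    omega
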